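/- arXiv:2402.02880 — 3 statements merged into one kernel-verified Lean document; each statement's English description precedes it below -/
import Mathlib

section
/- For Hermitian matrices A, B on ℂ^d and t ∈ ℝ, ‖e^{-iAt}e^{-iBt} - e^{-i(A+B)t}‖ ≤ ‖[A,B]‖·t²/2 for all t ≥ 0 (Trotter error bound for two unitaries). -/
open Matrix

attribute [local instance] Matrix.instL2OpNormedAddCommGroup Matrix.instL2OpNormedSpace
  Matrix.instL2OpNormedRing Matrix.instL2OpNormedAlgebra

/-!
Put `Z = X + Y` and `h u = e^{(t-u)Z} e^{uX} e^{uY}`, so that `h 0 = e^{tZ}` and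
`h t = e^{tX} e^{tY}`. Then `h' u = e^{(t-u)Z} [e^{uX}, Y] e^{uY}`, and differentiating
`e^{(s-u)X} Y e^{uX}` in the same way gives `‖[e^{sX}, Y]‖ ≤ ‖[X, Y]‖ s` whenever all the
exponentials `e^{uX}`, `u ≥ 0`, are contractions. Hence `‖h' u‖ ≤ ‖[X, Y]‖ u`, and integrating
over `[0, t]` yields the bound `‖[X, Y]‖ t² / 2`. For `X = -iA` with `A` Hermitian the
exponentials are unitary, hence contractions.
-/

open NormedSpace Set

theorem norm_image_sub_le_of_norm_deriv_le_linear {E : Type*} [NormedAddCommGroup E]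
    [NormedSpace ℝ E] {f f' : ℝ → E} {K t : ℝ} (hf : ∀ u ∈ Icc 0 t, HasDerivAt f (f' u) u)
    (bound : ∀ u ∈ Ico 0 t, ‖f' u‖ ≤ K * u) (ht : 0 ≤ t) :
    ‖f t - f 0‖ ≤ K * t ^ 2 / 2 := by
  have hB (u : ℝ) : HasDerivAt (fun u => K * u ^ 2 / 2) (K * u) u :=
    (((hasDerivAt_pow 2 u).const_mul K).div_const 2).congr_deriv (by norm_num; ring)
  refine image_norm_le_of_norm_deriv_right_le_deriv_boundary (f := fun u => f u - f 0)
    (fun u hu => ((hf u hu).sub_const _).continuousAt.continuousWithinAt)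
    (fun u hu => ((hf u (Ico_subset_Icc_self hu)).sub_const _).hasDerivWithinAt)
    (by simp) hB bound (right_mem_Icc.2 ht)

section ContractionSemigroup

variable {𝔸 : Type*} [NormedRing 𝔸] [NormedAlgebra ℝ 𝔸]

def IsContractionGenerator (X : 𝔸) : Prop :=
  ∀ u : ℝ, 0 ≤ u → ‖exp (u • X)‖ ≤ 1

variable [CompleteSpace 𝔸]

theorem hasDerivAt_exp_sub_smul (X : 𝔸) (t u : ℝ) :
    HasDerivAt (fun v : ℝ => exp ((t - v) • X)) (-(exp ((t - u) • X) * X)) u :=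
  (hasDerivAt_exp_smul_const X (t - u)).comp_const_sub t u

theorem IsContractionGenerator.norm_lie_exp_smul_le {X : 𝔸} (hX : IsContractionGenerator X)
    (Y : 𝔸) {s : ℝ} (hs : 0 ≤ s) : ‖⁅exp (s • X), Y⁆‖ ≤ ‖⁅X, Y⁆‖ * s := by
  set D : ℝ → 𝔸 := fun u => exp ((s - u) • X) * Y * exp (u • X)
  have hD : ∀ u, HasDerivAt D (-(exp ((s - u) • X) * ⁅X, Y⁆ * exp (u • X))) u := fun u => by
    convert ((hasDerivAt_exp_sub_smul X s u).mul_const Y).fun_mul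
      (hasDerivAt_exp_smul_const' X u) using 1
    rw [Ring.lie_def]
    noncomm_ring
  have bound : ∀ u ∈ Ico 0 s, ‖-(exp ((s - u) • X) * ⁅X, Y⁆ * exp (u • X))‖ ≤ ‖⁅X, Y⁆‖ := by
    intro u hu
    rw [norm_neg]
    calc _ ≤ ‖exp ((s - u) • X)‖ * ‖⁅X, Y⁆‖ * ‖exp (u • X)‖ := norm_mul₃_le
      _ ≤ 1 * ‖⁅X, Y⁆‖ * 1 := by
          gcongr
          exacts [hX _ (sub_nonneg.2 hu.2.le), hX _ hu.1]
      _ = ‖⁅X, Y⁆‖ := by ring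
  have := norm_image_sub_le_of_norm_deriv_le_segment' (fun u _ => (hD u).hasDerivWithinAt)
    bound s (right_mem_Icc.2 hs)
  simpa [D, Ring.lie_def, norm_sub_rev] using this

theorem norm_exp_smul_mul_exp_smul_sub_exp_smul_add_le {X Y : 𝔸}
    (hX : IsContractionGenerator X) (hY : IsContractionGenerator Y)
    (hXY : IsContractionGenerator (X + Y)) {t : ℝ} (ht : 0 ≤ t) :
    ‖exp (t • X) * exp (t • Y) - exp (t • (X + Y))‖ ≤ ‖⁅X, Y⁆‖ * t ^ 2 / 2 := by
  set h : ℝ → 𝔸 := fun u => exp ((t - u) • (X + Y)) * (exp (u • X) * exp (u • Y))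
  have hh : ∀ u, HasDerivAt h
      (exp ((t - u) • (X + Y)) * (⁅exp (u • X), Y⁆ * exp (u • Y))) u := fun u => by
    convert (hasDerivAt_exp_sub_smul (X + Y) t u).fun_mul
      ((hasDerivAt_exp_smul_const' X u).fun_mul (hasDerivAt_exp_smul_const' Y u)) using 1
    rw [Ring.lie_def]
    noncomm_ring
  have bound : ∀ u ∈ Ico 0 t,
      ‖exp ((t - u) • (X + Y)) * (⁅exp (u • X), Y⁆ * exp (u • Y))‖ ≤ ‖⁅X, Y⁆‖ * u := by
    intro u hu
    calc _ ≤ ‖exp ((t - u) • (X + Y))‖ * (‖⁅exp (u • X), Y⁆‖ * ‖exp (u • Y)‖) :=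
          (norm_mul_le _ _).trans (by gcongr; exact norm_mul_le _ _)
      _ ≤ 1 * (‖⁅X, Y⁆‖ * u * 1) := by
          gcongr
          exacts [hXY _ (sub_nonneg.2 hu.2.le), mul_nonneg (norm_nonneg _) hu.1,
            hX.norm_lie_exp_smul_le Y hu.1, hY _ hu.1]
      _ = ‖⁅X, Y⁆‖ * u := by ring
  simpa [h] using norm_image_sub_le_of_norm_deriv_le_linear (fun u _ => hh u) bound ht

theorem isContractionGenerator_of_mem_skewAdjoint [StarRing 𝔸] [CStarRing 𝔸] [StarModule ℝ 𝔸]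
    {X : 𝔸} (hX : X ∈ skewAdjoint 𝔸) : IsContractionGenerator X := by
  intro u _
  let +nondep : NormedAlgebra ℚ 𝔸 := .restrictScalars ℚ ℝ 𝔸
  have hu := exp_mem_unitary_of_mem_skewAdjoint (skewAdjoint.smul_mem u hX)
  rcases subsingleton_or_nontrivial 𝔸 with _ | _
  · simp [Subsingleton.elim (exp (u • X)) 0]
  · exact (CStarRing.norm_of_mem_unitary hu).le

end ContractionSemigroup

attribute [local instance] Matrix.instCStarRing

/-- Trotter error bound for two unitaries: for Hermitian `A`, `B` and `t ≥ 0`,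
`‖e^{-iAt}e^{-iBt} - e^{-i(A+B)t}‖ ≤ ‖[A,B]‖ t²/2`. -/
theorem trotter_error_bound {d : ℕ} (A B : Matrix (Fin d) (Fin d) ℂ)
    (hA : A.IsHermitian) (hB : B.IsHermitian) (t : ℝ) (ht : 0 ≤ t) :
    ‖NormedSpace.exp ((-Complex.I * (t : ℝ)) • A) *
        NormedSpace.exp ((-Complex.I * (t : ℝ)) • B) -
      NormedSpace.exp ((-Complex.I * (t : ℝ)) • (A + B))‖ ≤ ‖⁅A, B⁆‖ * t ^ 2 / 2 := by
  have hI : -Complex.I ∈ skewAdjoint ℂ := by simp [skewAdjoint.mem_iff]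
  have generator {M : Matrix (Fin d) (Fin d) ℂ} (hM : M.IsHermitian) :
      IsContractionGenerator ((-Complex.I) • M) :=
    isContractionGenerator_of_mem_skewAdjoint (hM.isSelfAdjoint.smul_mem_skewAdjoint hI)
  have hsmul (M : Matrix (Fin d) (Fin d) ℂ) :
      (-Complex.I * (t : ℝ)) • M = t • ((-Complex.I) • M) := by
    rw [mul_comm, ← smul_smul, Complex.coe_smul]
  have hlie : ‖⁅(-Complex.I) • A, (-Complex.I) • B⁆‖ = ‖⁅A, B⁆‖ := by
    rw [Ring.lie_def, Ring.lie_def, smul_mul_smul, smul_mul_smul, ← smul_sub, norm_smul]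
    simp
  rw [hsmul, hsmul, hsmul, smul_add, ← hlie]
  exact norm_exp_smul_mul_exp_smul_sub_exp_smul_add_le (generator hA) (generator hB)
    (smul_add (-Complex.I) A B ▸ generator (hA.add hB)) ht
end

section
/- Consider the real Lie algebra 𝔤 of 2×2 matrix-valued polynomial functions of a real variable x generated by i·x·σ_z, i·σ_x, and i·σ_y (under pointwise commutator). Then for every k ∈ ℕ, 𝔤 contains i·x^k·σ_x, i·x^k·σ_y, and i·x^k·σ_z. -/
/-!
The brackets of the `i x^k σ` are again of this form, with the degrees adding up:
`⁅i x^j σa, i x^k σb⁆ = -2 i x^(j+k) σc` for every cyclic permutation `(a, b, c)`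
of `(x, y, z)`.
Bracketing with the generator `i x σz` therefore raises the degree of the `σx`- and
`σy`-monomials by one, and the `σz`-monomials are brackets of `i σx` with `σy`-monomials.
-/

open Matrix

attribute [local instance 100] LieRing.ofAssociativeRing

noncomputable def sigmaX : Matrix (Fin 2) (Fin 2) ℂ := !![0, 1; 1, 0]
noncomputable def sigmaY : Matrix (Fin 2) (Fin 2) ℂ := !![0, -Complex.I; Complex.I, 0]
noncomputable def sigmaZ : Matrix (Fin 2) (Fin 2) ℂ := !![1, 0; 0, -1]

theorem LieSubalgebra.mem_of_lie_eq_smul {R L : Type*} [Field R] [LieRing L] [LieAlgebra R L]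
    (K : LieSubalgebra R L) {a b d : L} {c : R} (hc : c ≠ 0) (ha : a ∈ K) (hb : b ∈ K)
    (h : ⁅a, b⁆ = c • d) : d ∈ K := by
  have hd : d = c⁻¹ • ⁅a, b⁆ := by rw [h, inv_smul_smul₀ hc]
  exact hd ▸ K.smul_mem _ (K.lie_mem ha hb)

theorem lie_sigmaX_sigmaY : ⁅sigmaX, sigmaY⁆ = (2 * Complex.I) • sigmaZ := by
  ext i j
  fin_cases i <;> fin_cases j <;> norm_num [Ring.lie_def, sigmaX, sigmaY, sigmaZ, Complex.ext_iff]

theorem lie_sigmaY_sigmaZ : ⁅sigmaY, sigmaZ⁆ = (2 * Complex.I) • sigmaX := by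
  ext i j
  fin_cases i <;> fin_cases j <;> norm_num [Ring.lie_def, sigmaX, sigmaY, sigmaZ, Complex.ext_iff]

theorem lie_sigmaZ_sigmaX : ⁅sigmaZ, sigmaX⁆ = (2 * Complex.I) • sigmaY := by
  ext i j
  fin_cases i <;> fin_cases j <;> norm_num [Ring.lie_def, sigmaX, sigmaY, sigmaZ, Complex.ext_iff]

section

variable {n : Type*}

noncomputable def monomialI (k : ℕ) (A : Matrix n n ℂ) :
    ℝ → Matrix n n ℂ :=
  fun x => (x : ℂ) ^ k • (Complex.I • A)

theorem monomialI_zero (A : Matrix n n ℂ) :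
    monomialI 0 A = fun _ : ℝ => Complex.I • A := by
  funext x; simp [monomialI]

theorem monomialI_one (A : Matrix n n ℂ) :
    monomialI 1 A = fun x : ℝ => (x : ℂ) • Complex.I • A := by
  funext x; simp [monomialI]

theorem lie_monomialI [Fintype n] [DecidableEq n] {A B C : Matrix n n ℂ}
    (h : ⁅A, B⁆ = (2 * Complex.I) • C) (j k : ℕ) :
    ⁅monomialI j A, monomialI k B⁆ = (-2 : ℝ) • monomialI (j + k) C := by
  funext x
  calc ⁅monomialI j A, monomialI k B⁆ x
      = ⁅(x : ℂ) ^ j • Complex.I • A, (x : ℂ) ^ k • Complex.I • B⁆ := by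
        simp only [Ring.lie_def]; rfl
    _ = ((x : ℂ) ^ (j + k) * (Complex.I * Complex.I)) • ⁅A, B⁆ := by
        simp only [smul_lie, lie_smul, smul_smul, pow_add]; ring_nf
    _ = ((-2 : ℝ) • monomialI (j + k) C) x := by
        rw [h, Complex.I_mul_I, Pi.smul_apply, monomialI, RCLike.real_smul_eq_coe_smul (K := ℂ),
          smul_smul, smul_smul, smul_smul]
        push_cast; ring_nf

end

theorem monomialI_mem_of_generators (K : LieSubalgebra ℝ (ℝ → Matrix (Fin 2) (Fin 2) ℂ))
    (hz : monomialI 1 sigmaZ ∈ K) (hx : monomialI 0 sigmaX ∈ K) (hy : monomialI 0 sigmaY ∈ K)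
    (k : ℕ) :
    monomialI k sigmaX ∈ K ∧ monomialI k sigmaY ∈ K ∧ monomialI k sigmaZ ∈ K := by
  have h2 : (-2 : ℝ) ≠ 0 := by norm_num
  have hxy : ∀ m, monomialI m sigmaX ∈ K ∧ monomialI m sigmaY ∈ K := by
    intro m
    induction m with
    | zero => exact ⟨hx, hy⟩
    | succ m ih =>
      refine ⟨K.mem_of_lie_eq_smul h2 ih.2 hz (lie_monomialI lie_sigmaY_sigmaZ m 1), ?_⟩
      refine K.mem_of_lie_eq_smul h2 hz ih.1 ?_
      rw [lie_monomialI lie_sigmaZ_sigmaX, add_comm]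
  refine ⟨(hxy k).1, (hxy k).2, K.mem_of_lie_eq_smul h2 hx (hxy k).2 ?_⟩
  rw [lie_monomialI lie_sigmaX_sigmaY, zero_add]

/-- In the real Lie algebra of matrix-valued functions of `x` generated by
`i x σz`, `i σx` and `i σy` (pointwise commutator), every `i x^k σx`, `i x^k σy`,
`i x^k σz` is contained. -/
theorem lieSpan_contains_monomials :
    ∀ k : ℕ,
      (fun x : ℝ => (x : ℂ) ^ k • (Complex.I • sigmaX)) ∈
        LieSubalgebra.lieSpan ℝ (ℝ → Matrix (Fin 2) (Fin 2) ℂ)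
          {fun x : ℝ => (x : ℂ) • (Complex.I • sigmaZ),
           fun _ : ℝ => Complex.I • sigmaX, fun _ : ℝ => Complex.I • sigmaY} ∧
      (fun x : ℝ => (x : ℂ) ^ k • (Complex.I • sigmaY)) ∈
        LieSubalgebra.lieSpan ℝ (ℝ → Matrix (Fin 2) (Fin 2) ℂ)
          {fun x : ℝ => (x : ℂ) • (Complex.I • sigmaZ),
           fun _ : ℝ => Complex.I • sigmaX, fun _ : ℝ => Complex.I • sigmaY} ∧
      (fun x : ℝ => (x : ℂ) ^ k • (Complex.I • sigmaZ)) ∈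
        LieSubalgebra.lieSpan ℝ (ℝ → Matrix (Fin 2) (Fin 2) ℂ)
          {fun x : ℝ => (x : ℂ) • (Complex.I • sigmaZ),
           fun _ : ℝ => Complex.I • sigmaX, fun _ : ℝ => Complex.I • sigmaY} := by
  refine monomialI_mem_of_generators _ ?_ ?_ ?_ <;> apply LieSubalgebra.subset_lieSpan <;>
    simp [monomialI_zero, monomialI_one]
end

section
/- Consider the real Lie algebra generated by i·x·σ_z and i·σ_x inside the space of matrix-valued polynomial functions of x. Every element of this Lie algebra is of the form p(x)·iσ_x + q(x)·iσ_y + r(x)·iσ_z where p is an even polynomial and q, r are odd polynomials. In particular, i·σ_y does not belong to this Lie algebra. -/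
open Matrix Polynomial

attribute [local instance 100] LieRing.ofAssociativeRing

/-!
In the basis `iσx, iσy, iσz` the bracket is `-2` times the cross product of coefficient
vectors. Since an odd times an odd and an even times an even function are even, while an even
times an odd one is odd, the triples `(p, q, r)` with `p` even and `q, r` odd are closed under
this cross product, so the corresponding matrix-valued functions form a Lie subalgebra. Both
generators lie in it (`(0, 0, X)` and `(1, 0, 0)`), hence so does their Lie span; and `iσy`
does not, since its `q = 1` is not odd.
-/

noncomputable def pauliCombo (a b c : ℂ) : Matrix (Fin 2) (Fin 2) ℂ :=
  a • (Complex.I • sigmaX) + b • (Complex.I • sigmaY) + c • (Complex.I • sigmaZ)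

lemma pauliCombo_eq (a b c : ℂ) :
    pauliCombo a b c =
      !![c * Complex.I, a * Complex.I + b; a * Complex.I - b, -(c * Complex.I)] := by
  ext i j
  fin_cases i <;> fin_cases j <;> simp [pauliCombo, sigmaX, sigmaY, sigmaZ]; ring

lemma pauliCombo_injective {a b c a' b' c' : ℂ} (h : pauliCombo a b c = pauliCombo a' b' c') :
    a = a' ∧ b = b' ∧ c = c' := by
  simp only [pauliCombo_eq] at h
  have h00 := congrFun (congrFun h 0) 0
  have h01 := congrFun (congrFun h 0) 1
  have h10 := congrFun (congrFun h 1) 0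
  simp only [of_apply, cons_val', cons_val_zero, cons_val_one, empty_val', cons_val_fin_one,
    mul_left_inj' Complex.I_ne_zero] at h00 h01 h10
  exact ⟨by linear_combination (-Complex.I) * (h01 + h10) / 2 + (a - a') * Complex.I_sq,
    by linear_combination (h01 - h10) / 2, h00⟩

lemma pauliCombo_add (a b c a' b' c' : ℂ) :
    pauliCombo a b c + pauliCombo a' b' c' = pauliCombo (a + a') (b + b') (c + c') := by
  simp only [pauliCombo, add_smul]
  abel

lemma pauliCombo_smul (t a b c : ℂ) :
    t • pauliCombo a b c = pauliCombo (t * a) (t * b) (t * c) := by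
  simp only [pauliCombo, smul_add, mul_smul]

lemma lie_pauliCombo (a b c a' b' c' : ℂ) :
    ⁅pauliCombo a b c, pauliCombo a' b' c'⁆ =
      (-2 : ℂ) • pauliCombo (b * c' - c * b') (c * a' - a * c') (a * b' - b * a') := by
  simp only [Ring.lie_def, pauliCombo_eq]
  ext i j
  fin_cases i <;> fin_cases j <;> simp <;> grind [Complex.I_sq]

noncomputable def parityPauliSubalgebra : LieSubalgebra ℝ (ℝ → Matrix (Fin 2) (Fin 2) ℂ) where
  carrier := {f | ∃ p q r : ℝ[X], Function.Even (eval · p) ∧ Function.Odd (eval · q) ∧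
    Function.Odd (eval · r) ∧
    f = fun x => pauliCombo (p.eval x : ℝ) (q.eval x : ℝ) (r.eval x : ℝ)}
  add_mem' := by
    rintro _ _ ⟨p, q, r, hp, hq, hr, rfl⟩ ⟨p', q', r', hp', hq', hr', rfl⟩
    refine ⟨p + p', q + q', r + r', ?_, ?_, ?_, ?_⟩
    · intro x; simp only [eval_add, hp x, hp' x]
    · intro x; simp only [eval_add, hq x, hq' x]; ring
    · intro x; simp only [eval_add, hr x, hr' x]; ring
    · funext x; simp [pauliCombo_add]
  zero_mem' := ⟨0, 0, 0, by simp [Function.Even], by simp [Function.Odd], by simp [Function.Odd],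
    by funext; simp [pauliCombo]⟩
  smul_mem' := by
    rintro t _ ⟨p, q, r, hp, hq, hr, rfl⟩
    refine ⟨C t * p, C t * q, C t * r, ?_, ?_, ?_, ?_⟩
    · intro x; simp only [eval_mul, eval_C, hp x]
    · intro x; simp only [eval_mul, eval_C, hq x, mul_neg]
    · intro x; simp only [eval_mul, eval_C, hr x, mul_neg]
    · funext x; simp [← pauliCombo_smul, Complex.coe_smul]
  lie_mem' := by
    rintro _ _ ⟨p, q, r, hp, hq, hr, rfl⟩ ⟨p', q', r', hp', hq', hr', rfl⟩
    refine ⟨-2 * (q * r' - r * q'), -2 * (r * p' - p * r'), -2 * (p * q' - q * p'), ?_, ?_, ?_, ?_⟩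
    · intro x; simp only [eval_mul, eval_sub, eval_neg, eval_ofNat, hq x, hr x, hq' x, hr' x]; ring
    · intro x; simp only [eval_mul, eval_sub, eval_neg, eval_ofNat, hp x, hr x, hp' x, hr' x]; ring
    · intro x; simp only [eval_mul, eval_sub, eval_neg, eval_ofNat, hp x, hq x, hp' x, hq' x]; ring
    · funext x
      show ⁅pauliCombo _ _ _, pauliCombo _ _ _⁆ = _
      rw [lie_pauliCombo, pauliCombo_smul]
      simp only [eval_mul, eval_sub, eval_neg, eval_ofNat]
      push_cast
      rfl

lemma lieSpan_le_parityPauliSubalgebra :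
    LieSubalgebra.lieSpan ℝ (ℝ → Matrix (Fin 2) (Fin 2) ℂ)
        {fun x : ℝ => (x : ℂ) • (Complex.I • sigmaZ), fun _ : ℝ => Complex.I • sigmaX}
      ≤ parityPauliSubalgebra := by
  rw [LieSubalgebra.lieSpan_le]
  rintro f (rfl | rfl)
  · refine ⟨0, 0, X, by simp [Function.Even], by simp [Function.Odd], by simp [Function.Odd], ?_⟩
    funext x
    simp [pauliCombo]
  · refine ⟨1, 0, 0, by simp [Function.Even], by simp [Function.Odd], by simp [Function.Odd], ?_⟩
    funext x
    simp [pauliCombo]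

lemma const_I_smul_sigmaY_notMem_parityPauliSubalgebra :
    (fun _ : ℝ => Complex.I • sigmaY) ∉ parityPauliSubalgebra := by
  rintro ⟨p, q, r, -, hq, -, hf⟩
  have hσy : Complex.I • sigmaY = pauliCombo 0 1 0 := by simp [pauliCombo]
  have hq0 : ((q.eval 0 : ℝ) : ℂ) = 1 := (pauliCombo_injective (hσy ▸ congrFun hf 0).symm).2.1
  simp [hq.map_zero] at hq0

/-- Every element of the real Lie algebra generated by `i x σz` and `i σx` (inside
matrix-valued functions of `x`, with pointwise commutator) has the form
`p(x)·iσx + q(x)·iσy + r(x)·iσz` with `p` an even polynomial and `q, r` odd polynomials;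
in particular `i σy` does not belong to this Lie algebra. -/
theorem lieSpan_xz_structure :
    (∀ f ∈ LieSubalgebra.lieSpan ℝ (ℝ → Matrix (Fin 2) (Fin 2) ℂ)
        {fun x : ℝ => (x : ℂ) • (Complex.I • sigmaZ), fun _ : ℝ => Complex.I • sigmaX},
      ∃ p q r : Polynomial ℝ,
        (∀ x : ℝ, p.eval (-x) = p.eval x) ∧
        (∀ x : ℝ, q.eval (-x) = -q.eval x) ∧
        (∀ x : ℝ, r.eval (-x) = -r.eval x) ∧
        f = fun x : ℝ =>
          (Complex.ofReal (p.eval x)) • (Complex.I • sigmaX) + (Complex.ofReal (q.eval x)) • (Complex.I • sigmaY) +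
            (Complex.ofReal (r.eval x)) • (Complex.I • sigmaZ)) ∧
    (fun _ : ℝ => Complex.I • sigmaY) ∉
      LieSubalgebra.lieSpan ℝ (ℝ → Matrix (Fin 2) (Fin 2) ℂ)
        {fun x : ℝ => (x : ℂ) • (Complex.I • sigmaZ), fun _ : ℝ => Complex.I • sigmaX} :=
  ⟨fun _ hf => lieSpan_le_parityPauliSubalgebra hf, fun h =>
    const_I_smul_sigmaY_notMem_parityPauliSubalgebra (lieSpan_le_parityPauliSubalgebra h)⟩
end
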